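/- For any three proper metric monoids (G₁,δ₁), (G₂,δ₂), and (G₃,δ₃), the Gromov-Hausdorff monoid distance satisfies: Υ((G₁,δ₁),(G₂,δ₂)) ≤ √2/2, Υ((G₁,δ₁),(G₂,δ₂)) = Υ((G₂,δ₂),(G₁,δ₁)), and the triangle inequality Υ((G₁,δ₁),(G₃,δ₃)) ≤ Υ((G₁,δ₁),(G₂,δ₂)) + Υ((G₂,δ₂),(G₃,δ₃)). -/

import Mathlib

/-- `(ς, κ)` is an `r`-local `ε`-almost isometric isomorphism between the metric
monoids `G` and `H`. -/
def IsLocAlmostIsoIso {G H : Type*} [Monoid G] [MetricSpace G] [Monoid H] [MetricSpace H]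
    (ς : G → H) (κ : H → G) (ε r : ℝ) : Prop :=
  ς 1 = 1 ∧ κ 1 = 1 ∧
    (∀ g ∈ Metric.closedBall (1 : G) r, ∀ g' ∈ Metric.closedBall (1 : G) r,
      ∀ h ∈ Metric.closedBall (1 : H) r,
        |dist (ς g * ς g') h - dist (g * g') (κ h)| ≤ ε) ∧
    (∀ g ∈ Metric.closedBall (1 : H) r, ∀ g' ∈ Metric.closedBall (1 : H) r,
      ∀ h ∈ Metric.closedBall (1 : G) r,
        |dist (κ g * κ g') h - dist (g * g') (ς h)| ≤ ε)
/-- The Gromov-Hausdorff monoid distance `Υ` between two (proper) metric monoids: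
`min {√2/2, inf {ε > 0 : ∃ a (1/ε)-local ε-almost isometric isomorphism}}`. -/
noncomputable def Upsilon (G H : Type*) [Monoid G] [MetricSpace G] [Monoid H]
    [MetricSpace H] : ℝ :=
  sInf ({ε : ℝ | 0 < ε ∧ ∃ (ς : G → H) (κ : H → G), IsLocAlmostIsoIso ς κ ε (1 / ε)} ∪
    {Real.sqrt 2 / 2})

/-!
For the triangle inequality, compose an `ε₁`-witness `G₁ ⇄ G₂` with an `ε₂`-witness `G₂ ⇄ G₃`.
Since `ς 1 = 1`, each map moves distances to `1` by at most its `ε`, so on the ball of radius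
`1/(ε₁+ε₂)` the first map lands inside the ball of radius `1/ε₂` where the second one is
controlled, as soon as `ε₁ + ε₂ ≤ 1`. The two errors then add up, and the composite is an
`(ε₁+ε₂)`-witness. The cap `√2/2 < 1` makes `ε₁ + ε₂ ≤ 1` automatic whenever the inequality
is not trivial.
-/

open Metric

lemma one_div_add_add_le_one_div {a b : ℝ} (ha : 0 < a) (hb : 0 < b) (hab : a + b ≤ 1) :
    1 / (a + b) + a ≤ 1 / b := by
  rw [div_add' _ _ _ (by positivity), div_le_div_iff₀ (by positivity) hb]
  nlinarith [mul_pos ha hb]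

namespace IsLocAlmostIsoIso

variable {G H K : Type*} [Monoid G] [MetricSpace G] [Monoid H] [MetricSpace H]
  [Monoid K] [MetricSpace K]

lemma symm {ς : G → H} {κ : H → G} {ε r : ℝ} (h : IsLocAlmostIsoIso ς κ ε r) :
    IsLocAlmostIsoIso κ ς ε r :=
  ⟨h.2.1, h.1, h.2.2.2, h.2.2.1⟩

lemma dist_one_le {ς : G → H} {κ : H → G} {ε r : ℝ} (h : IsLocAlmostIsoIso ς κ ε r)
    (hr : 0 ≤ r) {g : G} (hg : g ∈ closedBall 1 r) : dist (ς g) 1 ≤ dist g 1 + ε := by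
  have h1G : (1 : G) ∈ closedBall 1 r := mem_closedBall_self hr
  have h1H : (1 : H) ∈ closedBall 1 r := mem_closedBall_self hr
  have hg1 := h.2.2.1 g hg 1 h1G 1 h1H
  rw [h.1, h.2.1, mul_one, mul_one] at hg1
  linarith [(abs_le.1 hg1).2]

lemma mapsTo_closedBall {ς : G → H} {κ : H → G} {ε r s t : ℝ} (h : IsLocAlmostIsoIso ς κ ε r)
    (hsr : s ≤ r) (hst : s + ε ≤ t) {g : G} (hg : g ∈ closedBall 1 s) :
    ς g ∈ closedBall 1 t := by
  have hgr : g ∈ closedBall 1 r := closedBall_subset_closedBall hsr hg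
  have := h.dist_one_le (dist_nonneg.trans hgr) hgr
  rw [mem_closedBall] at hg ⊢
  linarith

lemma abs_dist_comp_sub_le {ς₁ : G → H} {κ₁ : H → G} {ς₂ : H → K} {κ₂ : K → H} {ε₁ ε₂ : ℝ}
    (h₁ : IsLocAlmostIsoIso ς₁ κ₁ ε₁ (1 / ε₁)) (h₂ : IsLocAlmostIsoIso ς₂ κ₂ ε₂ (1 / ε₂))
    (hε₁ : 0 < ε₁) (hε₂ : 0 < ε₂) (hε : ε₁ + ε₂ ≤ 1) {g g' : G} {k : K}
    (hg : g ∈ closedBall 1 (1 / (ε₁ + ε₂))) (hg' : g' ∈ closedBall 1 (1 / (ε₁ + ε₂)))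
    (hk : k ∈ closedBall 1 (1 / (ε₁ + ε₂))) :
    |dist (ς₂ (ς₁ g) * ς₂ (ς₁ g')) k - dist (g * g') (κ₁ (κ₂ k))| ≤ ε₁ + ε₂ := by
  have hr₁ : 1 / (ε₁ + ε₂) ≤ 1 / ε₁ := one_div_le_one_div_of_le hε₁ (by linarith)
  have hr₂ : 1 / (ε₁ + ε₂) ≤ 1 / ε₂ := one_div_le_one_div_of_le hε₂ (by linarith)
  have hs₁ : 1 / (ε₁ + ε₂) + ε₁ ≤ 1 / ε₂ := one_div_add_add_le_one_div hε₁ hε₂ hε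
  have hs₂ : 1 / (ε₁ + ε₂) + ε₂ ≤ 1 / ε₁ := by
    simpa only [add_comm ε₂] using one_div_add_add_le_one_div hε₂ hε₁ (by linarith)
  have hH := h₂.2.2.1 _ (h₁.mapsTo_closedBall hr₁ hs₁ hg) _ (h₁.mapsTo_closedBall hr₁ hs₁ hg')
    k (closedBall_subset_closedBall hr₂ hk)
  have hG := h₁.2.2.1 g (closedBall_subset_closedBall hr₁ hg) g'
    (closedBall_subset_closedBall hr₁ hg') _ (h₂.symm.mapsTo_closedBall hr₂ hs₂ hk)
  calc |dist (ς₂ (ς₁ g) * ς₂ (ς₁ g')) k - dist (g * g') (κ₁ (κ₂ k))|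
      ≤ |dist (ς₂ (ς₁ g) * ς₂ (ς₁ g')) k - dist (ς₁ g * ς₁ g') (κ₂ k)|
        + |dist (ς₁ g * ς₁ g') (κ₂ k) - dist (g * g') (κ₁ (κ₂ k))| := abs_sub_le _ _ _
    _ ≤ ε₁ + ε₂ := by linarith

lemma comp {ς₁ : G → H} {κ₁ : H → G} {ς₂ : H → K} {κ₂ : K → H} {ε₁ ε₂ : ℝ}
    (h₁ : IsLocAlmostIsoIso ς₁ κ₁ ε₁ (1 / ε₁)) (h₂ : IsLocAlmostIsoIso ς₂ κ₂ ε₂ (1 / ε₂))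
    (hε₁ : 0 < ε₁) (hε₂ : 0 < ε₂) (hε : ε₁ + ε₂ ≤ 1) :
    IsLocAlmostIsoIso (ς₂ ∘ ς₁) (κ₁ ∘ κ₂) (ε₁ + ε₂) (1 / (ε₁ + ε₂)) := by
  refine ⟨by simp [h₁.1, h₂.1], by simp [h₁.2.1, h₂.2.1], ?_, ?_⟩
  · intro g hg g' hg' k hk
    exact h₁.abs_dist_comp_sub_le h₂ hε₁ hε₂ hε hg hg' hk
  · intro g hg g' hg' k hk
    rw [add_comm ε₁] at hg hg' hk ⊢
    exact h₂.symm.abs_dist_comp_sub_le h₁.symm hε₂ hε₁ (by linarith) hg hg' hk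

end IsLocAlmostIsoIso

section Upsilon

variable (G H K : Type*) [Monoid G] [MetricSpace G] [Monoid H] [MetricSpace H]
  [Monoid K] [MetricSpace K]

lemma upsilon_le_sqrt_two_div_two : Upsilon G H ≤ √2 / 2 := by
  refine csInf_le ⟨0, ?_⟩ (Or.inr rfl)
  rintro x (hx | rfl)
  · exact hx.1.le
  · positivity

lemma upsilon_nonneg : 0 ≤ Upsilon G H := by
  refine le_csInf ⟨√2 / 2, Or.inr rfl⟩ ?_
  rintro x (hx | rfl)
  · exact hx.1.le
  · positivity

lemma upsilon_comm : Upsilon G H = Upsilon H G := by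
  unfold Upsilon
  congr 1
  ext ε
  constructor <;> rintro (⟨hε, ς, κ, h⟩ | h)
  exacts [Or.inl ⟨hε, κ, ς, h.symm⟩, Or.inr h, Or.inl ⟨hε, κ, ς, h.symm⟩, Or.inr h]

lemma exists_isLocAlmostIsoIso_of_upsilon_lt {δ : ℝ} (hδ : δ ≤ √2 / 2) (h : Upsilon G H < δ) :
    ∃ ε < δ, 0 < ε ∧ ∃ (ς : G → H) (κ : H → G), IsLocAlmostIsoIso ς κ ε (1 / ε) := by
  obtain ⟨ε, hε | rfl, hεδ⟩ := exists_lt_of_csInf_lt ⟨√2 / 2, Or.inr rfl⟩ h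
  · exact ⟨ε, hεδ, hε⟩
  · exact absurd hδ hεδ.not_ge

variable {G H} in
lemma upsilon_le_of_isLocAlmostIsoIso {ε : ℝ} (hε : 0 < ε) {ς : G → H} {κ : H → G}
    (h : IsLocAlmostIsoIso ς κ ε (1 / ε)) : Upsilon G H ≤ ε :=
  csInf_le ⟨0, fun _ hx ↦ hx.elim (·.1.le) (by rintro rfl; positivity)⟩ (Or.inl ⟨hε, ς, κ, h⟩)

lemma upsilon_triangle : Upsilon G K ≤ Upsilon G H + Upsilon H K := by
  refine le_of_forall_pos_le_add fun η hη ↦ ?_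
  by_cases hbig : √2 / 2 ≤ Upsilon G H + Upsilon H K + η
  · exact (upsilon_le_sqrt_two_div_two G K).trans hbig
  have hGH := upsilon_nonneg G H
  have hHK := upsilon_nonneg H K
  obtain ⟨ε₁, hε₁η, hε₁, ς₁, κ₁, h₁⟩ :=
    exists_isLocAlmostIsoIso_of_upsilon_lt G H (δ := Upsilon G H + η / 2) (by linarith)
      (by linarith)
  obtain ⟨ε₂, hε₂η, hε₂, ς₂, κ₂, h₂⟩ :=
    exists_isLocAlmostIsoIso_of_upsilon_lt H K (δ := Upsilon H K + η / 2) (by linarith)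
      (by linarith)
  have hε : ε₁ + ε₂ ≤ 1 := by linarith [Real.sqrt_two_lt_three_halves]
  have := upsilon_le_of_isLocAlmostIsoIso (by positivity) (h₁.comp h₂ hε₁ hε₂ hε)
  linarith

end Upsilon

theorem upsilon_metric_properties_general
    (G₁ G₂ G₃ : Type*) [Monoid G₁] [MetricSpace G₁] [Monoid G₂] [MetricSpace G₂]
    [Monoid G₃] [MetricSpace G₃] :
    Upsilon G₁ G₂ ≤ Real.sqrt 2 / 2 ∧
      Upsilon G₁ G₂ = Upsilon G₂ G₁ ∧
      Upsilon G₁ G₃ ≤ Upsilon G₁ G₂ + Upsilon G₂ G₃ :=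
  ⟨upsilon_le_sqrt_two_div_two G₁ G₂, upsilon_comm G₁ G₂, upsilon_triangle G₁ G₂ G₃⟩

/-- For proper metric monoids, the Gromov-Hausdorff monoid
distance `Υ` is bounded by `√2/2`, is symmetric, and satisfies the triangle
inequality. -/
theorem upsilon_metric_properties
    (G₁ G₂ G₃ : Type*) [Monoid G₁] [MetricSpace G₁] [Monoid G₂] [MetricSpace G₂]
    [Monoid G₃] [MetricSpace G₃]
    (h_left₁ : ∀ g h k : G₁, dist (g * h) (g * k) = dist h k)
    (h_cont₁ : Continuous fun p : G₁ × G₁ => p.1 * p.2)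
    (h_proper₁ : ProperSpace G₁)
    (h_left₂ : ∀ g h k : G₂, dist (g * h) (g * k) = dist h k)
    (h_cont₂ : Continuous fun p : G₂ × G₂ => p.1 * p.2)
    (h_proper₂ : ProperSpace G₂)
    (h_left₃ : ∀ g h k : G₃, dist (g * h) (g * k) = dist h k)
    (h_cont₃ : Continuous fun p : G₃ × G₃ => p.1 * p.2)
    (h_proper₃ : ProperSpace G₃) :
    Upsilon G₁ G₂ ≤ Real.sqrt 2 / 2 ∧
      Upsilon G₁ G₂ = Upsilon G₂ G₁ ∧
      Upsilon G₁ G₃ ≤ Upsilon G₁ G₂ + Upsilon G₂ G₃ :=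
  upsilon_metric_properties_general G₁ G₂ G₃
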